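/- Flow graphs form a separation algebra: the set of flow graphs with the partial multiplication ⋆ and the singleton set of units consisting of the empty flow graph (∅,∅,∅) is a separation algebra; that is, ⋆ is commutative and associative wherever defined, cancellative (if s₁⋆t and s₂⋆t are defined and equal then s₁ = s₂), and s ⋆ (∅,∅,∅) = s for every flow graph s; moreover the ghost multiplication ⌢ is commutative and associative wherever defined. -/

import Mathlib

/-!
The laws of `⌢` are bookkeeping on disjoint unions, and `⋆` is cancellative because the inflow
that `s` receives from `t` is `t`'s outflow. The substance is associativity of `⋆`: when
`(s ⋆ t) ⋆ u` is defined, `t ⌢ u` must preserve the flows of `t` and `u`. By Kleene iteration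
(this is where continuity of the edge functions enters) a flow is the least prefixed point of
its flow equation. In a composite `s ⌢ t` whose flow restricts to `s.flow` on `s`, the boundary
conditions make the composite flow a prefixed point for `t`, and `s.flow + t.flow` a prefixed
point for the composite, so the composite flow also restricts to `t.flow` on `t`. Applied to
`s ⌢ (t ⌢ u) = (s ⌢ t) ⌢ u`, this gives the flows of `t ⌢ u`.
-/

universe u

/-- A flow monoid: a commutative monoid whose natural order
(`m ≤ n ↔ ∃ o, n = m + o`) is a partial order that forms an ω-cpo, with
continuous addition. `csup` assigns to every ascending chain its join. -/
class FlowMonoid (M : Type u) extends AddCommMonoid M, PartialOrder M, OrderBot M,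
    IsOrderedAddMonoid M, CanonicallyOrderedAdd M where
  /-- The join of an ascending chain. -/
  csup : (ℕ → M) → M
  isLUB_csup : ∀ K : ℕ → M, Monotone K → IsLUB (Set.range K) (csup K)
  add_csup : ∀ (n : M) (K : ℕ → M), Monotone K → n + csup K = csup fun i => n + K i

variable {M : Type u} [FlowMonoid M]

/-- Continuity: `f` commutes with joins of ascending chains. -/
def FMCont (f : M → M) : Prop :=
  ∀ K : ℕ → M, Monotone K →
    IsLUB (Set.range fun i => f (K i)) (f (FlowMonoid.csup K))

/-- A flow graph: a finite set of nodes `X ⊆ ℕ`, continuous edge functions, and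
a finitely supported inflow from sources outside `X` into `X`. (The edge
functions of sources outside `X` and the inflow outside its domain are
canonically zero.) -/
structure FlowGraph (M : Type u) [FlowMonoid M] where
  /-- The nodes. -/
  X : Finset ℕ
  /-- The edge functions: `E x y` labels the edge from `x` to `y`. -/
  E : ℕ → ℕ → M → M
  /-- The inflow: `inflow y x` is the flow the graph receives at `x ∈ X` from the
  external node `y ∉ X`. -/
  inflow : ℕ → ℕ → M
  econt : ∀ x y, x ∈ X → FMCont (E x y)
  edom : ∀ x y, x ∉ X → E x y = fun _ => 0
  inflow_fin : ∀ x, (Function.support fun y => inflow y x).Finite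
  inflow_dom : ∀ y x, inflow y x ≠ 0 → y ∉ X ∧ x ∈ X

namespace FlowGraph

/-- One step of the flow fixed-point computation, with inflow `i`. -/
noncomputable def stepWith (h : FlowGraph M) (i : ℕ → ℕ → M) (c : ℕ → M) : ℕ → M :=
  fun x => if x ∈ h.X then (∑ᶠ y, i y x) + ∑ y ∈ h.X, h.E y x (c y) else 0

/-- The flow for a custom inflow `i`, obtained by Kleene iteration: the least
function satisfying the flow equation. -/
noncomputable def flowWith (h : FlowGraph M) (i : ℕ → ℕ → M) : ℕ → M :=
  fun x => FlowMonoid.csup fun n => (h.stepWith i)^[n] (fun _ => 0) x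

/-- The flow of a flow graph. -/
noncomputable def flow (h : FlowGraph M) : ℕ → M := h.flowWith h.inflow

/-- The outflow of a flow graph: `out x y = E x y (flow x)`. -/
noncomputable def out (h : FlowGraph M) (x y : ℕ) : M := h.E x y (h.flow x)

/-- The transfer function: maps an inflow `i` to the resulting outflow at `y`. -/
noncomputable def tf (h : FlowGraph M) (i : ℕ → ℕ → M) (y : ℕ) : M :=
  ∑ x ∈ h.X, h.E x y (h.flowWith i x)

/-- The ghost multiplication of flow graphs: disjoint union of the node sets and
edges; the inflow of each component is restricted to sources outside the other. -/
def gmul (s t : FlowGraph M) : FlowGraph M where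
  X := s.X ∪ t.X
  E := fun x y => if x ∈ s.X then s.E x y else t.E x y
  inflow := fun y x => if y ∈ s.X ∪ t.X then 0 else s.inflow y x + t.inflow y x
  econt := by
    intro x y hx
    try dsimp only
    by_cases hs : x ∈ s.X
    · rw [if_pos hs]; exact s.econt x y hs
    · rw [if_neg hs]
      rcases Finset.mem_union.mp hx with h | h
      · exact absurd h hs
      · exact t.econt x y h
  edom := by
    intro x y hx
    try dsimp only
    rw [if_neg fun h => hx (Finset.mem_union_left _ h)]
    exact t.edom x y fun h => hx (Finset.mem_union_right _ h)
  inflow_fin := by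
    intro x
    refine Set.Finite.subset ((s.inflow_fin x).union (t.inflow_fin x)) ?_
    intro y hy
    rw [Function.mem_support] at hy
    try dsimp only at hy
    by_cases hmem : y ∈ s.X ∪ t.X
    · rw [if_pos hmem] at hy; exact absurd rfl hy
    · rw [if_neg hmem] at hy
      by_cases h1 : s.inflow y x = 0
      · have h2 : t.inflow y x ≠ 0 := fun h2 => hy (by rw [h1, h2, add_zero])
        exact Set.mem_union_right _ (Function.mem_support.mpr h2)
      · exact Set.mem_union_left _ (Function.mem_support.mpr h1)
  inflow_dom := by
    intro y x hy
    try dsimp only at hy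
    by_cases hmem : y ∈ s.X ∪ t.X
    · rw [if_pos hmem] at hy; exact absurd rfl hy
    · rw [if_neg hmem] at hy
      refine ⟨hmem, ?_⟩
      by_cases h1 : s.inflow y x = 0
      · have h2 : t.inflow y x ≠ 0 := fun h2 => hy (by rw [h1, h2, add_zero])
        exact Finset.mem_union_right _ (t.inflow_dom y x h2).2
      · exact Finset.mem_union_left _ (s.inflow_dom y x h1).2

/-- Definedness of the multiplication `s ⋆ t` of flow graphs: the ghost
multiplication is defined, the inflow expectation of each graph at the mutual
boundary matches the outflow of the other, and the flows are preserved in the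
composition (whose result is then `gmul s t`). -/
def MDef (s t : FlowGraph M) : Prop :=
  Disjoint s.X t.X ∧
  (∀ x ∈ s.X, ∀ y ∈ t.X, s.out x y = t.inflow x y ∧ t.out y x = s.inflow y x) ∧
  (∀ x ∈ s.X, (gmul s t).flow x = s.flow x) ∧
  (∀ y ∈ t.X, (gmul s t).flow y = t.flow y)

end FlowGraph

namespace FlowGraph

/-- The empty flow graph `(∅, ∅, ∅)`. -/
def emptyFG : FlowGraph M where
  X := ∅
  E := fun _ _ => fun _ => 0
  inflow := fun _ _ => 0
  econt := by intro x y hx; exact absurd hx (Finset.notMem_empty x)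
  edom := fun _ _ _ => rfl
  inflow_fin := by
    intro x
    apply Set.Finite.subset Set.finite_empty
    intro y hy
    rw [Function.mem_support] at hy
    exact absurd rfl hy
  inflow_dom := fun y x h => absurd rfl h

end FlowGraph

namespace FlowMonoid

lemma le_csup {K : ℕ → M} (hK : Monotone K) (n : ℕ) : K n ≤ csup K :=
  (isLUB_csup K hK).1 ⟨n, rfl⟩

lemma csup_le {K : ℕ → M} (hK : Monotone K) {b : M} (h : ∀ n, K n ≤ b) : csup K ≤ b :=
  (isLUB_csup K hK).2 (Set.forall_mem_range.2 h)

lemma csup_add_csup_le {K L : ℕ → M} (hK : Monotone K) (hL : Monotone L) :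
    csup K + csup L ≤ csup (K + L) := by
  have hKL : Monotone (K + L) := hK.add hL
  rw [add_csup _ _ hL]
  refine csup_le (fun _ _ h => add_le_add_right (hL h) _) fun i => ?_
  rw [add_comm, add_csup _ _ hK]
  refine csup_le (fun _ _ h => add_le_add_right (hK h) _) fun j => ?_
  calc L i + K j ≤ L (max i j) + K (max i j) :=
        add_le_add (hL (le_max_left i j)) (hK (le_max_right i j))
    _ ≤ csup (K + L) := by rw [add_comm]; exact le_csup hKL _

lemma sum_csup_le {ι : Type*} (S : Finset ι) (K : ι → ℕ → M) (hK : ∀ i ∈ S, Monotone (K i)) :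
    ∑ i ∈ S, csup (K i) ≤ csup fun n => ∑ i ∈ S, K i n := by
  classical
  induction S using Finset.induction_on with
  | empty => simp
  | insert a S ha ih =>
    have hS : ∀ i ∈ S, Monotone (K i) := fun i hi => hK i (Finset.mem_insert_of_mem hi)
    simp only [Finset.sum_insert ha]
    calc csup (K a) + ∑ i ∈ S, csup (K i)
        ≤ csup (K a) + csup fun n => ∑ i ∈ S, K i n := add_le_add_right (ih hS) _
      _ ≤ _ := csup_add_csup_le (hK a (Finset.mem_insert_self a S))
          fun _ _ h => Finset.sum_le_sum fun i hi => hS i hi h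

end FlowMonoid

open FlowMonoid

lemma FMCont.monotone {f : M → M} (hf : FMCont f) : Monotone f := by
  intro a b hab
  let K : ℕ → M := fun n => if n = 0 then a else b
  have hK : Monotone K := monotone_nat_of_le_succ fun n => by cases n <;> simp [K, hab]
  have hb : csup K = b :=
    le_antisymm (csup_le hK fun n => by by_cases hn : n = 0 <;> simp [K, hn, hab])
      (le_csup hK 1)
  simpa [K, hb] using (hf K hK).1 ⟨0, rfl⟩

lemma FMCont.map_csup_le {f : M → M} (hf : FMCont f) {K : ℕ → M} (hK : Monotone K) :
    f (csup K) ≤ csup (f ∘ K) :=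
  (hf K hK).2 (Set.forall_mem_range.2 (le_csup (hf.monotone.comp hK)))

namespace FlowGraph

variable (h : FlowGraph M) (i : ℕ → ℕ → M)

lemma ext {s t : FlowGraph M} (hX : s.X = t.X) (hE : s.E = t.E) (hin : s.inflow = t.inflow) :
    s = t := by
  cases s; cases t; cases hX; cases hE; cases hin; rfl

lemma inflow_eq_zero_of_mem {y : ℕ} (hy : y ∈ h.X) (x : ℕ) : h.inflow y x = 0 := by
  by_contra hne; exact (h.inflow_dom y x hne).1 hy

lemma inflow_eq_zero_of_notMem (y : ℕ) {x : ℕ} (hx : x ∉ h.X) : h.inflow y x = 0 := by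
  by_contra hne; exact hx (h.inflow_dom y x hne).2

lemma stepWith_of_mem {c : ℕ → M} {x : ℕ} (hx : x ∈ h.X) :
    h.stepWith i c x = (∑ᶠ y, i y x) + ∑ y ∈ h.X, h.E y x (c y) := if_pos hx

lemma stepWith_of_notMem {c : ℕ → M} {x : ℕ} (hx : x ∉ h.X) : h.stepWith i c x = 0 := if_neg hx

lemma stepWith_congr {c d : ℕ → M} (hcd : ∀ y ∈ h.X, c y = d y) (x : ℕ) :
    h.stepWith i c x = h.stepWith i d x := by
  unfold stepWith
  split_ifs
  · rw [Finset.sum_congr rfl fun y hy => by rw [hcd y hy]]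
  · rfl

lemma stepWith_mono : Monotone (h.stepWith i) := by
  intro c d hcd x
  unfold stepWith
  split_ifs
  · gcongr with y hy
    exact (h.econt y x hy).monotone (hcd y)
  · rfl

lemma monotone_iterate_stepWith : Monotone fun n => (h.stepWith i)^[n] (fun _ => 0) :=
  (h.stepWith_mono i).monotone_iterate_of_le_map fun _ => zero_le

lemma flowWith_le_of_stepWith_le {c : ℕ → M} (hc : h.stepWith i c ≤ c) : h.flowWith i ≤ c := by
  have hn : ∀ n, (h.stepWith i)^[n] (fun _ => 0) ≤ c := by
    intro n
    induction n with
    | zero => exact fun _ => zero_le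
    | succ n ih =>
      rw [Function.iterate_succ_apply']
      exact (h.stepWith_mono i ih).trans hc
  exact fun x => csup_le (fun _ _ hmn => h.monotone_iterate_stepWith i hmn x) fun n => hn n x

lemma stepWith_flowWith_le : h.stepWith i (h.flowWith i) ≤ h.flowWith i := by
  intro x
  by_cases hx : x ∈ h.X
  swap
  · rw [h.stepWith_of_notMem i hx]; exact zero_le
  set K : ℕ → ℕ → M := fun n => (h.stepWith i)^[n] (fun _ => 0)
  have hK : ∀ y, Monotone fun n => K n y := fun y _ _ hmn => h.monotone_iterate_stepWith i hmn y
  have hEK : ∀ y ∈ h.X, Monotone fun n => h.E y x (K n y) :=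
    fun y hy => (h.econt y x hy).monotone.comp (hK y)
  calc h.stepWith i (h.flowWith i) x
      = (∑ᶠ y, i y x) + ∑ y ∈ h.X, h.E y x (csup fun n => K n y) := h.stepWith_of_mem i hx
    _ ≤ (∑ᶠ y, i y x) + ∑ y ∈ h.X, csup fun n => h.E y x (K n y) := by
        gcongr with y hy
        exact (h.econt y x hy).map_csup_le (hK y)
    _ ≤ (∑ᶠ y, i y x) + csup fun n => ∑ y ∈ h.X, h.E y x (K n y) := by
        gcongr
        exact sum_csup_le _ _ hEK
    _ = csup fun n => K (n + 1) x := by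
        rw [add_csup _ _ fun _ _ hmn => Finset.sum_le_sum fun y hy => hEK y hy hmn]
        congr 1
        funext n
        simp only [K, Function.iterate_succ_apply', h.stepWith_of_mem i hx]
    _ ≤ h.flowWith i x := csup_le (fun _ _ hmn => hK x (by omega)) fun n => le_csup (hK x) _

lemma stepWith_flowWith : h.stepWith i (h.flowWith i) = h.flowWith i :=
  le_antisymm (h.stepWith_flowWith_le i)
    (h.flowWith_le_of_stepWith_le i (h.stepWith_mono i (h.stepWith_flowWith_le i)))

lemma stepWith_flow : h.stepWith h.inflow h.flow = h.flow := h.stepWith_flowWith h.inflow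

lemma flow_le_of_stepWith_le {c : ℕ → M} (hc : h.stepWith h.inflow c ≤ c) : h.flow ≤ c :=
  h.flowWith_le_of_stepWith_le h.inflow hc

lemma flow_eq_zero_of_notMem {x : ℕ} (hx : x ∉ h.X) : h.flow x = 0 := by
  rw [flow, ← h.stepWith_flowWith, h.stepWith_of_notMem _ hx]

end FlowGraph

namespace FlowGraph

variable {s t : FlowGraph M}

lemma gmul_X : (gmul s t).X = s.X ∪ t.X := rfl

lemma gmul_inflow (y x : ℕ) :
    (gmul s t).inflow y x = if y ∈ s.X ∪ t.X then 0 else s.inflow y x + t.inflow y x := rfl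

lemma gmul_E_of_mem_left {x : ℕ} (hx : x ∈ s.X) : (gmul s t).E x = s.E x :=
  funext fun _ => if_pos hx

lemma gmul_E_of_notMem_left {x : ℕ} (hx : x ∉ s.X) : (gmul s t).E x = t.E x :=
  funext fun _ => if_neg hx

lemma gmul_E_of_mem_right (hd : Disjoint s.X t.X) {x : ℕ} (hx : x ∈ t.X) :
    (gmul s t).E x = t.E x :=
  gmul_E_of_notMem_left (Finset.disjoint_right.mp hd hx)

lemma gmul_inflow_of_mem_left (hd : Disjoint s.X t.X) {x y : ℕ} (hx : x ∈ s.X) (hy : y ∉ t.X) :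
    (gmul s t).inflow y x = s.inflow y x := by
  by_cases hys : y ∈ s.X
  · rw [s.inflow_eq_zero_of_mem hys]; exact if_pos (Finset.mem_union_left _ hys)
  · rw [gmul_inflow, if_neg (by simp [hys, hy]),
      t.inflow_eq_zero_of_notMem y (Finset.disjoint_left.mp hd hx), add_zero]

lemma gmul_comm (hd : Disjoint s.X t.X) : gmul s t = gmul t s := by
  refine ext (Finset.union_comm _ _) ?_ ?_
  · funext x
    by_cases hs : x ∈ s.X
    · rw [gmul_E_of_mem_left hs, gmul_E_of_mem_right hd.symm hs]
    by_cases ht : x ∈ t.X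
    · rw [gmul_E_of_mem_left ht, gmul_E_of_mem_right hd ht]
    · rw [gmul_E_of_notMem_left hs, gmul_E_of_notMem_left ht]
      funext y
      rw [s.edom x y hs, t.edom x y ht]
  · funext y x
    simp only [gmul, Finset.union_comm s.X, add_comm (s.inflow y x)]

lemma gmul_inflow_of_mem_right (hd : Disjoint s.X t.X) {x y : ℕ} (hx : x ∈ t.X) (hy : y ∉ s.X) :
    (gmul s t).inflow y x = t.inflow y x := by
  rw [gmul_comm hd, gmul_inflow_of_mem_left hd.symm hx hy]

lemma gmul_assoc (s t u : FlowGraph M) : gmul (gmul s t) u = gmul s (gmul t u) := by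
  refine ext (Finset.union_assoc _ _ _) ?_ ?_
  · funext x
    simp only [gmul, Finset.mem_union]
    split_ifs <;> tauto
  · funext y x
    simp only [gmul, Finset.union_assoc]
    split_ifs <;> simp_all [add_assoc]

lemma gmul_emptyFG (s : FlowGraph M) : gmul s emptyFG = s := by
  refine ext (Finset.union_empty _) ?_ ?_
  · funext x
    by_cases hs : x ∈ s.X
    · exact gmul_E_of_mem_left hs
    · rw [gmul_E_of_notMem_left hs]
      funext y
      rw [s.edom x y hs]
      rfl
  · funext y x
    by_cases hx : x ∈ s.X
    · exact gmul_inflow_of_mem_left disjoint_bot_right hx (Finset.notMem_empty y)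
    · rw [s.inflow_eq_zero_of_notMem y hx]
      exact (gmul s emptyFG).inflow_eq_zero_of_notMem y (by simpa [gmul, emptyFG] using hx)


lemma finsum_inflow_eq_sum_add_finsum_gmul_inflow (hd : Disjoint s.X t.X) {x : ℕ} (hx : x ∈ t.X) :
    ∑ᶠ y, t.inflow y x = ∑ y ∈ s.X, t.inflow y x + ∑ᶠ y, (gmul s t).inflow y x := by
  have hG : (fun y => (gmul s t).inflow y x) = (↑s.X : Set ℕ)ᶜ.indicator (t.inflow · x) := by
    funext y
    by_cases hy : y ∈ s.X
    · rw [Set.indicator_of_notMem (by simpa using hy), gmul_inflow,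
        if_pos (Finset.mem_union_left _ hy)]
    · rw [Set.indicator_of_mem (by simpa using hy), gmul_inflow_of_mem_right hd hx hy]
  rw [hG, ← finsum_mem_def, ← finsum_mem_coe_finset, Set.compl_eq_univ_sdiff,
    finsum_mem_add_sdiff' (Set.subset_univ _) ((t.inflow_fin x).subset Set.inter_subset_right),
    finsum_mem_univ]

lemma gmul_stepWith_of_mem_right (hd : Disjoint s.X t.X) {x : ℕ} (hx : x ∈ t.X) (c : ℕ → M) :
    (gmul s t).stepWith (gmul s t).inflow c x = (∑ᶠ y, (gmul s t).inflow y x) +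
      (∑ y ∈ s.X, s.E y x (c y) + ∑ y ∈ t.X, t.E y x (c y)) := by
  rw [stepWith_of_mem _ _ (Finset.mem_union_right _ hx), gmul_X, Finset.sum_union hd]
  congr 2
  · exact Finset.sum_congr rfl fun y hy => by rw [gmul_E_of_mem_left hy]
  · exact Finset.sum_congr rfl fun y hy => by rw [gmul_E_of_mem_right hd hy]

lemma stepWith_eq_finsum_gmul_inflow_add (hd : Disjoint s.X t.X) {x : ℕ} (hx : x ∈ t.X)
    (c : ℕ → M) :
    t.stepWith t.inflow c x = (∑ᶠ y, (gmul s t).inflow y x) +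
      (∑ y ∈ s.X, t.inflow y x + ∑ y ∈ t.X, t.E y x (c y)) := by
  rw [stepWith_of_mem _ _ hx, finsum_inflow_eq_sum_add_finsum_gmul_inflow hd hx]
  abel

lemma stepWith_le_gmul_stepWith (hd : Disjoint s.X t.X) {x : ℕ} (hx : x ∈ t.X) {c : ℕ → M}
    (h : ∀ y ∈ s.X, t.inflow y x ≤ s.E y x (c y)) :
    t.stepWith t.inflow c x ≤ (gmul s t).stepWith (gmul s t).inflow c x := by
  rw [stepWith_eq_finsum_gmul_inflow_add hd hx, gmul_stepWith_of_mem_right hd hx]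
  gcongr with y hy
  exact h y hy

lemma gmul_stepWith_le_stepWith (hd : Disjoint s.X t.X) {x : ℕ} (hx : x ∈ t.X) {c : ℕ → M}
    (h : ∀ y ∈ s.X, s.E y x (c y) ≤ t.inflow y x) :
    (gmul s t).stepWith (gmul s t).inflow c x ≤ t.stepWith t.inflow c x := by
  rw [stepWith_eq_finsum_gmul_inflow_add hd hx, gmul_stepWith_of_mem_right hd hx]
  gcongr with y hy
  exact h y hy

lemma flow_le_gmul_flow (hd : Disjoint s.X t.X)
    (h : ∀ a ∈ s.X, ∀ b ∈ t.X, t.inflow a b ≤ s.E a b ((gmul s t).flow a)) :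
    t.flow ≤ (gmul s t).flow := by
  refine t.flow_le_of_stepWith_le fun x => ?_
  by_cases hx : x ∈ t.X
  · calc t.stepWith t.inflow (gmul s t).flow x
        ≤ (gmul s t).stepWith (gmul s t).inflow (gmul s t).flow x :=
          stepWith_le_gmul_stepWith hd hx fun y hy => h y hy x hx
      _ = (gmul s t).flow x := congrFun (gmul s t).stepWith_flow x
  · rw [t.stepWith_of_notMem _ hx]
    exact zero_le

lemma gmul_stepWith_flow_add_le_of_mem_right (hd : Disjoint s.X t.X)
    (h : ∀ a ∈ s.X, ∀ b ∈ t.X, s.out a b ≤ t.inflow a b) {x : ℕ} (hx : x ∈ t.X) :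
    (gmul s t).stepWith (gmul s t).inflow (s.flow + t.flow) x ≤ (s.flow + t.flow) x := by
  have hs : ∀ y ∈ s.X, (s.flow + t.flow) y = s.flow y := fun y hy => by
    rw [Pi.add_apply, t.flow_eq_zero_of_notMem (Finset.disjoint_left.mp hd hy), add_zero]
  have ht : ∀ y ∈ t.X, (s.flow + t.flow) y = t.flow y := fun y hy => by
    rw [Pi.add_apply, s.flow_eq_zero_of_notMem (Finset.disjoint_right.mp hd hy), zero_add]
  calc (gmul s t).stepWith (gmul s t).inflow (s.flow + t.flow) x
      ≤ t.stepWith t.inflow (s.flow + t.flow) x :=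
        gmul_stepWith_le_stepWith hd hx fun y hy => by rw [hs y hy]; exact h y hy x hx
    _ = t.stepWith t.inflow t.flow x := t.stepWith_congr _ ht x
    _ = (s.flow + t.flow) x := by rw [t.stepWith_flow, ht x hx]

lemma gmul_flow_le_add (hd : Disjoint s.X t.X)
    (hst : ∀ a ∈ s.X, ∀ b ∈ t.X, s.out a b ≤ t.inflow a b)
    (hts : ∀ a ∈ t.X, ∀ b ∈ s.X, t.out a b ≤ s.inflow a b) :
    (gmul s t).flow ≤ s.flow + t.flow := by
  refine (gmul s t).flow_le_of_stepWith_le fun x => ?_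
  by_cases hxt : x ∈ t.X
  · exact gmul_stepWith_flow_add_le_of_mem_right hd hst hxt
  by_cases hxs : x ∈ s.X
  · rw [gmul_comm hd, add_comm]
    exact gmul_stepWith_flow_add_le_of_mem_right hd.symm hts hxs
  rw [stepWith_of_notMem _ _ (by simp [gmul, hxs, hxt])]
  exact zero_le

lemma gmul_flow_eq_right (hd : Disjoint s.X t.X)
    (hs : ∀ a ∈ s.X, (gmul s t).flow a = s.flow a)
    (hst : ∀ a ∈ s.X, ∀ b ∈ t.X, t.inflow a b = s.out a b)
    (hts : ∀ a ∈ t.X, ∀ b ∈ s.X, t.E a b ((gmul s t).flow a) = s.inflow a b) :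
    ∀ x ∈ t.X, (gmul s t).flow x = t.flow x := by
  have hle : t.flow ≤ (gmul s t).flow :=
    flow_le_gmul_flow hd fun a ha b hb => by rw [hst a ha b hb, out, hs a ha]
  have hge : (gmul s t).flow ≤ s.flow + t.flow :=
    gmul_flow_le_add hd (fun a ha b hb => (hst a ha b hb).ge) fun a ha b hb => by
      rw [out, ← hts a ha b hb]
      exact (t.econt a b ha).monotone (hle a)
  intro x hx
  refine le_antisymm ?_ (hle x)
  simpa [s.flow_eq_zero_of_notMem (Finset.disjoint_right.mp hd hx)] using hge x


lemma MDef.symm (h : MDef s t) : MDef t s :=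
  ⟨h.1.symm, fun x hx y hy => (h.2.1 y hy x hx).symm,
    fun x hx => by rw [gmul_comm h.1.symm]; exact h.2.2.2 x hx,
    fun y hy => by rw [gmul_comm h.1.symm]; exact h.2.2.1 y hy⟩

lemma MDef.gmul_out_of_mem_left (h : MDef s t) {x : ℕ} (hx : x ∈ s.X) (y : ℕ) :
    (gmul s t).out x y = s.out x y := by
  rw [out, gmul_E_of_mem_left hx, h.2.2.1 x hx, out]

lemma MDef.gmul_out_of_mem_right (h : MDef s t) {x : ℕ} (hx : x ∈ t.X) (y : ℕ) :
    (gmul s t).out x y = t.out x y := by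
  rw [out, gmul_E_of_mem_right h.1 hx, h.2.2.2 x hx, out]

lemma MDef.assoc {u : FlowGraph M} (hst : MDef s t) (h : MDef (gmul s t) u) :
    MDef t u ∧ MDef s (gmul t u) := by
  obtain ⟨hd, hbdry, hflow_st, hflow_u⟩ := h
  obtain ⟨hd_su, hd_tu⟩ := Finset.disjoint_union_left.mp hd
  have hd_s_tu : Disjoint s.X (gmul t u).X := Finset.disjoint_union_right.mpr ⟨hst.1, hd_su⟩
  have hG := gmul_assoc s t u
  have hflow_s : ∀ x ∈ s.X, (gmul s (gmul t u)).flow x = s.flow x := fun x hx => by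
    rw [← hG, hflow_st x (Finset.mem_union_left _ hx), hst.2.2.1 x hx]
  have hflow_t : ∀ x ∈ t.X, (gmul s (gmul t u)).flow x = t.flow x := fun x hx => by
    rw [← hG, hflow_st x (Finset.mem_union_right _ hx), hst.2.2.2 x hx]
  have hin : ∀ a ∈ s.X, ∀ b ∈ (gmul t u).X, (gmul t u).inflow a b = s.out a b := by
    intro a ha b hb
    rcases Finset.mem_union.mp hb with hbt | hbu
    · rw [gmul_inflow_of_mem_left hd_tu hbt (Finset.disjoint_left.mp hd_su ha)]
      exact (hst.2.1 a ha b hbt).1.symm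
    · rw [gmul_inflow_of_mem_right hd_tu hbu (Finset.disjoint_left.mp hst.1 ha),
        ← hst.gmul_out_of_mem_left ha]
      exact (hbdry a (Finset.mem_union_left _ ha) b hbu).1.symm
  have hout : ∀ b ∈ (gmul t u).X, ∀ a ∈ s.X,
      (gmul t u).E b a ((gmul s (gmul t u)).flow b) = s.inflow b a := by
    intro b hb a ha
    rcases Finset.mem_union.mp hb with hbt | hbu
    · rw [gmul_E_of_mem_left hbt, hflow_t b hbt]
      exact (hst.2.1 a ha b hbt).2
    · rw [gmul_E_of_mem_right hd_tu hbu, ← hG, hflow_u b hbu,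
        ← gmul_inflow_of_mem_left hst.1 ha (Finset.disjoint_right.mp hd_tu hbu)]
      exact (hbdry a (Finset.mem_union_left _ ha) b hbu).2
  have hflow_tu := gmul_flow_eq_right hd_s_tu hflow_s hin hout
  refine ⟨⟨hd_tu, fun x hx y hy => ⟨?_, ?_⟩, fun x hx => ?_, fun y hy => ?_⟩,
    ⟨hd_s_tu, fun x hx y hy => ⟨(hin x hx y hy).symm, ?_⟩, hflow_s, hflow_tu⟩⟩
  · rw [← hst.gmul_out_of_mem_right hx]
    exact (hbdry x (Finset.mem_union_right _ hx) y hy).1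
  · rw [(hbdry x (Finset.mem_union_right _ hx) y hy).2,
      gmul_inflow_of_mem_right hst.1 hx (Finset.disjoint_right.mp hd_su hy)]
  · rw [← hflow_tu x (Finset.mem_union_left _ hx), hflow_t x hx]
  · rw [← hflow_tu y (Finset.mem_union_right _ hy), ← hG, hflow_u y hy]
  · rw [out, ← hflow_tu y hy]
    exact hout y hy x hx

lemma gmul_right_cancel {s₁ s₂ : FlowGraph M} (h₁ : MDef s₁ t) (h₂ : MDef s₂ t)
    (h : gmul s₁ t = gmul s₂ t) : s₁ = s₂ := by
  have hX : s₁.X = s₂.X := by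
    rw [← Finset.union_sdiff_cancel_right h₁.1, ← Finset.union_sdiff_cancel_right h₂.1]
    exact congrArg (fun g => g.X \ t.X) h
  refine ext hX (funext fun x => ?_) (funext fun y => funext fun x => ?_)
  · by_cases hx : x ∈ s₁.X
    · rw [← gmul_E_of_mem_left (t := t) hx, h, gmul_E_of_mem_left (hX ▸ hx)]
    · funext y
      rw [s₁.edom x y hx, s₂.edom x y (hX ▸ hx)]
  · by_cases hx : x ∈ s₁.X
    swap
    · rw [s₁.inflow_eq_zero_of_notMem y hx, s₂.inflow_eq_zero_of_notMem y (hX ▸ hx)]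
    by_cases hy : y ∈ t.X
    · rw [← (h₁.2.1 x hx y hy).2, ← (h₂.2.1 x (hX ▸ hx) y hy).2]
    · rw [← gmul_inflow_of_mem_left h₁.1 hx hy, h, gmul_inflow_of_mem_left h₂.1 (hX ▸ hx) hy]

lemma mDef_emptyFG (s : FlowGraph M) : MDef s emptyFG :=
  ⟨disjoint_bot_right, fun _ _ y hy => absurd hy (Finset.notMem_empty y),
    fun _ _ => by rw [gmul_emptyFG], fun y hy => absurd hy (Finset.notMem_empty y)⟩

end FlowGraph

open FlowGraph in
/-- Flow graphs form a separation algebra: the multiplication `⋆`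
is commutative and associative wherever defined, cancellative, and the empty
flow graph is a unit; moreover the ghost multiplication `⌢` is commutative and
associative wherever defined. -/
theorem flowGraphs_form_separation_algebra :
    -- `⋆` is commutative wherever defined
    (∀ s t : FlowGraph M, MDef s t → MDef t s ∧ gmul s t = gmul t s) ∧
    -- `⋆` is associative wherever defined
    (∀ s t u : FlowGraph M, MDef s t → MDef (gmul s t) u →
      MDef t u ∧ MDef s (gmul t u) ∧ gmul (gmul s t) u = gmul s (gmul t u)) ∧
    -- `⋆` is cancellative
    (∀ s₁ s₂ t : FlowGraph M, MDef s₁ t → MDef s₂ t →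
      gmul s₁ t = gmul s₂ t → s₁ = s₂) ∧
    -- the empty flow graph is a unit
    (∀ s : FlowGraph M, MDef s emptyFG ∧ gmul s emptyFG = s) ∧
    -- `⌢` is commutative wherever defined
    (∀ s t : FlowGraph M, Disjoint s.X t.X → gmul s t = gmul t s) ∧
    -- `⌢` is associative wherever defined
    (∀ s t u : FlowGraph M, Disjoint s.X t.X → Disjoint (gmul s t).X u.X →
      gmul (gmul s t) u = gmul s (gmul t u)) :=
  ⟨fun _ _ h => ⟨h.symm, gmul_comm h.1⟩,
    fun s t u hst h => ⟨(hst.assoc h).1, (hst.assoc h).2, gmul_assoc s t u⟩,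
    fun _ _ _ => gmul_right_cancel,
    fun s => ⟨mDef_emptyFG s, gmul_emptyFG s⟩,
    fun _ _ hd => gmul_comm hd,
    fun s t u _ _ => gmul_assoc s t u⟩
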